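/- arXiv:2509.05186 — 3 statements merged into one kernel-verified Lean document; each statement's English description precedes it below -/
import Mathlib

section
/- Let Y be a measurable space, Z a standard Borel space, and κ : Y → Measure Z a probability kernel (a Markov kernel). Then there exists a jointly measurable function f : [0,1] × Y → Z such that for every y ∈ Y, the pushforward of the uniform measure on [0,1] under f(·, y) equals κ(y). -/
open MeasureTheory ProbabilityTheory Set unitInterval

lemma map_projIcc_volume_restrict_unitInterval :
    (volume.restrict (Icc (0 : ℝ) 1)).map (projIcc 0 1 zero_le_one) = (volume : Measure I) := by
  rw [← measurePreserving_coe.map_eq, Measure.map_map continuous_projIcc.measurable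
    measurable_subtype_coe]
  simp only [Function.comp_def, projIcc_val, Measure.map_id']

/-- Kernel representation lemma: any Markov kernel `κ` from a measurable space `Y`
to a standard Borel space `Z` admits a jointly measurable representation
`f : [0,1] × Y → Z` such that for every `y`, the pushforward of the uniform measure
on `[0,1]` under `f (·, y)` equals `κ y`. -/
theorem stmt_3 {Y Z : Type*} [MeasurableSpace Y] [MeasurableSpace Z]
    [StandardBorelSpace Z] [Nonempty Z]
    (κ : Kernel Y Z) [IsMarkovKernel κ] :
    ∃ f : ℝ × Y → Z, Measurable f ∧
      ∀ y : Y, Measure.map (fun u => f (u, y)) (volume.restrict (Set.Icc (0 : ℝ) 1))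
        = κ y := by
  obtain ⟨f, hf, hfκ⟩ := κ.exists_measurable_map_eq_unitInterval
  have hproj : Measurable (projIcc (0 : ℝ) 1 zero_le_one) := continuous_projIcc.measurable
  refine ⟨fun p => f p.2 (projIcc 0 1 zero_le_one p.1),
    hf.comp (measurable_snd.prodMk (hproj.comp measurable_fst)), fun y => ?_⟩
  rw [← hfκ y, ← map_projIcc_volume_restrict_unitInterval,
    Measure.map_map hf.of_uncurry_left hproj]
  rfl
end

section
/- Let H be a Polish space, η a nonatomic Borel probability measure on H, Y a measurable space, Z a standard Borel space, and κ : Y → Measure Z a Markov kernel. Then there exists a measurable map G : H × Y → Z such that for every y ∈ Y, the pushforward of η under G(·, y) equals κ(y). -/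
/-!
Transport `η` to `ℝ` by a Borel embedding `e`. The image measure has no atoms, so its
distribution function `F` is continuous and pushes it forward to the uniform measure on `[0, 1]`
(probability integral transform). Writing `κ y` as the image of the uniform measure under a jointly
measurable `f y : [0, 1] → Z`, the map `G (h, y) = f y (F (e h))` works.
-/

open MeasureTheory ProbabilityTheory Set unitInterval

lemma MeasurableEmbedding.nullSingletonClass_map {α β : Type*} [MeasurableSpace α]
    [MeasurableSpace β] {f : α → β} (hf : MeasurableEmbedding f) (μ : Measure α)
    [NullSingletonClass μ] : NullSingletonClass (μ.map f) :=
  ⟨fun x => by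
    rw [hf.map_apply]
    exact (subsingleton_singleton.preimage hf.injective).measure_zero μ⟩

namespace ProbabilityTheory

section NullSingleton

variable (μ : Measure ℝ) [IsProbabilityMeasure μ] [NullSingletonClass μ]

lemma continuous_cdf : Continuous (cdf μ) := by
  refine continuous_iff_continuousAt.2 fun x => continuousAt_iff_continuous_left_right.2
    ⟨?_, (cdf μ).right_continuous x⟩
  have h := (cdf μ).measure_singleton x
  rw [measure_cdf, measure_singleton, eq_comm, ENNReal.ofReal_eq_zero, sub_nonpos] at h
  rw [← continuousWithinAt_Iio_iff_Iic, (monotone_cdf μ).continuousWithinAt_Iio_iff_leftLim_eq]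
  exact le_antisymm ((monotone_cdf μ).leftLim_le le_rfl) h

lemma measure_cdf_le {t : ℝ} (ht₀ : 0 ≤ t) (ht₁ : t < 1) :
    μ {v | cdf μ v ≤ t} = ENNReal.ofReal t := by
  set S := {v | cdf μ v ≤ t}
  have hbdd : BddAbove S := by
    obtain ⟨x₀, hx₀⟩ := ((tendsto_cdf_atTop μ).eventually (eventually_gt_nhds ht₁)).exists
    exact ⟨x₀, fun v hv => not_lt.1 fun hlt => (hx₀.trans_le (monotone_cdf μ hlt.le)).not_ge hv⟩
  rcases S.eq_empty_or_nonempty with hS | hS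
  · obtain rfl : t = 0 := by
      refine le_antisymm (not_lt.1 fun hpos => ?_) ht₀
      obtain ⟨v, hv⟩ := ((tendsto_cdf_atBot μ).eventually (eventually_lt_nhds hpos)).exists
      exact hS.subset hv.le
    rw [hS, measure_empty, ENNReal.ofReal_zero]
  -- `S` is closed since `cdf μ` is continuous, so it is the half-line up to its supremum `c`;
  -- continuity again, from the right of `c`, gives `cdf μ c = t`.
  set c := sSup S
  have hc : cdf μ c ≤ t := (isClosed_le (continuous_cdf μ) continuous_const).csSup_mem hS hbdd
  have hSc : S = Iic c := Subset.antisymm (fun v hv => le_csSup hbdd hv)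
    fun v hv => (monotone_cdf μ hv).trans hc
  have hct : t ≤ cdf μ c := by
    refine ge_of_tendsto (((continuous_cdf μ).tendsto c).mono_left
      (nhdsWithin_le_nhds (s := Ioi c))) ?_
    filter_upwards [self_mem_nhdsWithin] with v (hv : c < v)
    exact (not_le.1 fun h => hv.not_ge (le_csSup hbdd h)).le
  rw [hSc, ← ofReal_cdf, le_antisymm hc hct]

end NullSingleton

noncomputable def cdfUnitInterval (μ : Measure ℝ) (v : ℝ) : I :=
  ⟨cdf μ v, cdf_nonneg μ v, cdf_le_one μ v⟩

lemma measurable_cdfUnitInterval (μ : Measure ℝ) : Measurable (cdfUnitInterval μ) :=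
  (monotone_cdf μ).measurable.subtype_mk

lemma map_cdfUnitInterval_eq_volume (μ : Measure ℝ) [IsProbabilityMeasure μ]
    [NullSingletonClass μ] : μ.map (cdfUnitInterval μ) = volume := by
  have := Measure.isProbabilityMeasure_map (μ := μ) (measurable_cdfUnitInterval μ).aemeasurable
  refine Measure.ext_of_Iic _ _ fun x => ?_
  rw [Measure.map_apply (measurable_cdfUnitInterval μ) measurableSet_Iic, volume_Iic]
  rcases x.2.2.lt_or_eq with hx | hx
  · exact measure_cdf_le μ x.2.1 hx
  · obtain rfl : x = 1 := Subtype.ext hx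
    rw [show Iic (1 : I) = univ from eq_univ_of_forall fun _ => le_one', preimage_univ,
      measure_univ, Icc.coe_one, ENNReal.ofReal_one]

end ProbabilityTheory

theorem MeasureTheory.Measure.exists_measurable_map_eq_volume_unitInterval {Ω : Type*}
    [MeasurableSpace Ω] [StandardBorelSpace Ω] (η : Measure Ω) [IsProbabilityMeasure η]
    [NullSingletonClass η] : ∃ τ : Ω → I, Measurable τ ∧ η.map τ = volume := by
  have he := measurableEmbedding_embeddingReal Ω
  have := isProbabilityMeasure_map (μ := η) he.measurable.aemeasurable
  have := he.nullSingletonClass_map η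
  let μ := η.map (embeddingReal Ω)
  refine ⟨cdfUnitInterval μ ∘ embeddingReal Ω, (measurable_cdfUnitInterval μ).comp he.measurable,
    ?_⟩
  rw [← Measure.map_map (measurable_cdfUnitInterval μ) he.measurable,
    map_cdfUnitInterval_eq_volume]

/-- Existence of a conditional generative model (Generative ICON): given a nonatomic
Borel probability measure `η` on a Polish space `H` and a Markov kernel `κ` from a
measurable space `Y` to a standard Borel space `Z`, there is a measurable map
`G : H × Y → Z` such that for every `y`, the pushforward of `η` under `G (·, y)`
equals `κ y`. -/
theorem stmt_4 {H Y Z : Type*} [TopologicalSpace H] [PolishSpace H]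
    [MeasurableSpace H] [BorelSpace H]
    [MeasurableSpace Y] [MeasurableSpace Z] [StandardBorelSpace Z] [Nonempty Z]
    (η : Measure H) [IsProbabilityMeasure η] [NullSingletonClass η]
    (κ : Kernel Y Z) [IsMarkovKernel κ] :
    ∃ G : H × Y → Z, Measurable G ∧
      ∀ y : Y, Measure.map (fun h => G (h, y)) η = κ y := by
  obtain ⟨τ, hτ, hητ⟩ := η.exists_measurable_map_eq_volume_unitInterval
  obtain ⟨f, hf, hfκ⟩ := κ.exists_measurable_map_eq_unitInterval
  refine ⟨fun p => f p.2 (τ p.1), hf.comp (measurable_snd.prodMk (hτ.comp measurable_fst)), ?_⟩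
  intro y
  rw [← hfκ, ← hητ, Measure.map_map hf.of_uncurry_left hτ]
  rfl
end

section
/- Let (Ω, F, P) be a probability space, A, Y, Z standard Borel spaces, and random variables α : Ω → A, and pairs (yʲ, zʲ), j = 1,…,J, such that given α, the pairs (yʲ, zʲ) are i.i.d. with common conditional law P_{y,z|α}. Then the conditional distribution of z^J given (y^J, {(yʲ, zʲ)}_{j=1}^{J−1}) equals the mixture ∫_A P_{z|y,α}(· | y^J, α) Π(dα), where Π is the conditional (posterior) distribution of α given {(yʲ, zʲ)}_{j=1}^{J−1}, provided y^J is independent of α and of the first J−1 pairs. -/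
/-!
Given `α = a`, splitting the last coordinate off the i.i.d. product shows that the new pair
`(yᴶ, zᴶ) ~ ν_Y ⊗ lik(a, ·)` is independent of the history `d` of the first `n` pairs.
Integrating `a` out against the prior and rewriting the joint law of `(α, d)` through the
posterior (Bayes' rule), the law of `((yᴶ, d), zᴶ)` becomes `(ν_Y ⊗ law(d)) ⊗ₘ K` with
`K (y, d) = ∫ lik(a, y) post(d)(da)`; uniqueness of disintegrations identifies `K` with the
conditional distribution of `zᴶ`.
-/

open MeasureTheory ProbabilityTheory
open scoped ENNReal

lemma MeasureTheory.Measure.pi_map_last_init {β : Type*} [MeasurableSpace β] (m : Measure β)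
    [SigmaFinite m] (n : ℕ) :
    (Measure.pi fun _ : Fin (n + 1) => m).map
        (fun f => (f (Fin.last n), fun (j : Fin n) => f j.castSucc))
      = m.prod (Measure.pi fun _ : Fin n => m) := by
  convert (measurePreserving_piFinSuccAbove (fun _ : Fin (n + 1) => m) (Fin.last n)).map_eq
    using 2
  ext f : 1
  simp only [MeasurableEquiv.piFinSuccAbove_apply, Fin.insertNthEquiv_last,
    Fin.snocEquiv_symm_apply, Prod.mk.injEq, true_and]
  rfl

lemma MeasureTheory.Measure.pi_map_init {β : Type*} [MeasurableSpace β] (m : Measure β)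
    [IsProbabilityMeasure m] (n : ℕ) :
    (Measure.pi fun _ : Fin (n + 1) => m).map (fun f (j : Fin n) => f j.castSucc)
      = Measure.pi fun _ : Fin n => m := by
  have h := congrArg (Measure.map Prod.snd) (Measure.pi_map_last_init m n)
  rwa [Measure.map_map measurable_snd (by fun_prop), Measure.map_snd_prod, measure_univ,
    one_smul] at h

namespace ProbabilityTheory.Kernel

variable {A D Y Z : Type*} [MeasurableSpace A] [MeasurableSpace D] [MeasurableSpace Y]
  [MeasurableSpace Z]

noncomputable def posteriorPredictive (post : Kernel D A) (lik : Kernel (A × Y) Z) :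
    Kernel (Y × D) Z :=
  lik ∘ₖ (prodMkLeft Y post ×ₖ deterministic Prod.fst measurable_fst)

instance (post : Kernel D A) [IsSFiniteKernel post] (lik : Kernel (A × Y) Z)
    [IsSFiniteKernel lik] : IsSFiniteKernel (posteriorPredictive post lik) := by
  unfold posteriorPredictive; infer_instance

instance (post : Kernel D A) [IsMarkovKernel post] (lik : Kernel (A × Y) Z)
    [IsMarkovKernel lik] : IsMarkovKernel (posteriorPredictive post lik) := by
  unfold posteriorPredictive; infer_instance

lemma posteriorPredictive_apply' (post : Kernel D A) [IsSFiniteKernel post]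
    (lik : Kernel (A × Y) Z) (p : Y × D) {T : Set Z} (hT : MeasurableSet T) :
    posteriorPredictive post lik p T = ∫⁻ a, lik (a, p.1) T ∂post p.2 := by
  rw [posteriorPredictive, comp_apply' _ _ _ hT, prod_apply, prodMkLeft_apply,
    deterministic_apply, Measure.prod_dirac,
    MeasureTheory.lintegral_map (lik.measurable_coe hT) (by fun_prop)]

lemma posteriorPredictive_apply (post : Kernel D A) [IsSFiniteKernel post]
    (lik : Kernel (A × Y) Z) (p : Y × D) :
    posteriorPredictive post lik p = (post p.2).bind fun a => lik (a, p.1) := by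
  ext T hT
  rw [posteriorPredictive_apply' _ _ _ hT, Measure.bind_apply hT (by fun_prop)]

lemma map_last_init_eq_prod {W : Type*} [MeasurableSpace W] {n : ℕ}
    (κ : Kernel A (Fin (n + 1) → W)) [IsSFiniteKernel κ]
    (η : Kernel A W) [IsMarkovKernel η] (h : ∀ a, κ a = Measure.pi fun _ => η a) :
    κ.map (fun f => (f (Fin.last n), fun (j : Fin n) => f j.castSucc))
      = η ×ₖ κ.map (fun f (j : Fin n) => f j.castSucc) := by
  ext1 a
  rw [prod_apply, map_apply _ (by fun_prop), map_apply _ (by fun_prop), h a,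
    Measure.pi_map_last_init, Measure.pi_map_init]

end ProbabilityTheory.Kernel

namespace ProbabilityTheory

variable {A D Y Z : Type*} [MeasurableSpace A] [MeasurableSpace D] [MeasurableSpace Y]
  [MeasurableSpace Z]

lemma setLIntegral_lintegral_posterior {ρ : Measure A} [SFinite ρ] {κ : Kernel A D}
    [IsSFiniteKernel κ] {post : Kernel D A} [IsSFiniteKernel post]
    (hpost : (κ ∘ₘ ρ) ⊗ₘ post = (ρ ⊗ₘ κ).map Prod.swap) {f : A → ℝ≥0∞} (hf : Measurable f)
    {s : Set D} (hs : MeasurableSet s) :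
    ∫⁻ d in s, ∫⁻ a, f a ∂post d ∂(κ ∘ₘ ρ) = ∫⁻ a, f a * κ a s ∂ρ := by
  calc ∫⁻ d in s, ∫⁻ a, f a ∂post d ∂(κ ∘ₘ ρ)
      = ∫⁻ q in s ×ˢ Set.univ, f q.2 ∂((κ ∘ₘ ρ) ⊗ₘ post) := by
        rw [Measure.setLIntegral_compProd (by fun_prop) hs .univ]
        simp_rw [Measure.restrict_univ]
    _ = ∫⁻ q in Set.univ ×ˢ s, f q.1 ∂(ρ ⊗ₘ κ) := by
        rw [hpost, setLIntegral_map (hs.prod .univ) (by fun_prop) measurable_swap,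
          Set.preimage_swap_prod]
        rfl
    _ = ∫⁻ a, f a * κ a s ∂ρ := by
        rw [Measure.setLIntegral_compProd (by fun_prop) .univ hs, Measure.restrict_univ]
        simp only [lintegral_const, MeasurableSet.univ, Measure.restrict_apply, Set.univ_inter]

theorem map_comp_prod_eq_compProd_posteriorPredictive {ρ : Measure A} [IsFiniteMeasure ρ]
    {νY : Measure Y} [IsFiniteMeasure νY] {lik : Kernel (A × Y) Z} [IsFiniteKernel lik]
    {κ : Kernel A D} [IsFiniteKernel κ] {post : Kernel D A} [IsSFiniteKernel post]
    (hpost : (κ ∘ₘ ρ) ⊗ₘ post = (ρ ⊗ₘ κ).map Prod.swap) :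
    (((Kernel.const A νY ⊗ₖ lik) ×ₖ κ) ∘ₘ ρ).map (fun q => ((q.1.1, q.2), q.1.2))
      = (νY.prod (κ ∘ₘ ρ)) ⊗ₘ Kernel.posteriorPredictive post lik := by
  refine Measure.ext_prod₃' fun {S₁ S₂ T} hS₁ hS₂ hT => ?_
  have hlik : Measurable fun q : A × Y => lik q T := lik.measurable_coe hT
  calc (((Kernel.const A νY ⊗ₖ lik) ×ₖ κ) ∘ₘ ρ).map (fun q => ((q.1.1, q.2), q.1.2))
        ((S₁ ×ˢ S₂) ×ˢ T)
      = (((Kernel.const A νY ⊗ₖ lik) ×ₖ κ) ∘ₘ ρ) ((S₁ ×ˢ T) ×ˢ S₂) := by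
        rw [Measure.map_apply (by fun_prop) ((hS₁.prod hS₂).prod hT)]
        congr 1
        ext; simp [and_right_comm]
    _ = ∫⁻ a, (∫⁻ y in S₁, lik (a, y) T ∂νY) * κ a S₂ ∂ρ := by
        rw [Measure.bind_apply ((hS₁.prod hT).prod hS₂) (Kernel.aemeasurable _)]
        simp_rw [Kernel.prod_apply_prod, Kernel.compProd_apply_prod hS₁ hT, Kernel.const_apply]
    _ = ∫⁻ a, ∫⁻ y in S₁, lik (a, y) T * κ a S₂ ∂νY ∂ρ :=
        lintegral_congr fun a => (lintegral_mul_const _ (hlik.comp measurable_prodMk_left)).symm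
    _ = ∫⁻ y in S₁, ∫⁻ a, lik (a, y) T * κ a S₂ ∂ρ ∂νY :=
        lintegral_lintegral_swap
          (hlik.mul ((κ.measurable_coe hS₂).comp measurable_fst)).aemeasurable
    _ = ∫⁻ y in S₁, ∫⁻ d in S₂, Kernel.posteriorPredictive post lik (y, d) T ∂(κ ∘ₘ ρ) ∂νY := by
        refine setLIntegral_congr_fun hS₁ fun y _ => ?_
        simp_rw [Kernel.posteriorPredictive_apply' _ _ _ hT]
        exact (setLIntegral_lintegral_posterior hpost (hlik.comp measurable_prodMk_right) hS₂).symm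
    _ = ((νY.prod (κ ∘ₘ ρ)) ⊗ₘ Kernel.posteriorPredictive post lik) ((S₁ ×ˢ S₂) ×ˢ T) := by
        rw [Measure.compProd_apply_prod (hS₁.prod hS₂) hT,
          setLIntegral_prod _ (Kernel.measurable_coe _ hT).aemeasurable]

end ProbabilityTheory

theorem stmt_13_general {Ω A Y Z : Type*} [MeasurableSpace Ω]
    [MeasurableSpace A] [StandardBorelSpace A] [Nonempty A]
    [MeasurableSpace Y]
    [MeasurableSpace Z] [StandardBorelSpace Z] [Nonempty Z]
    (μ : Measure Ω) [IsProbabilityMeasure μ]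
    (n : ℕ)
    (α : Ω → A) (hα : Measurable α)
    (yz : Fin (n + 1) → Ω → Y × Z) (hyz : ∀ j, Measurable (yz j))
    (νY : Measure Y) [IsProbabilityMeasure νY]
    (lik : Kernel (A × Y) Z) [IsMarkovKernel lik]
    (κJ : Kernel A (Fin (n + 1) → Y × Z)) [IsMarkovKernel κJ]
    (hiid : ∀ a : A, κJ a = Measure.pi fun _ : Fin (n + 1) =>
        νY.compProd (lik.comap (fun y => (a, y))
          (measurable_const.prodMk measurable_id)))
    (hjoint : Measure.map (fun ω => (α ω, fun j => yz j ω)) μ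
        = (μ.map α).compProd κJ) :
    let prev : Ω → (Fin n → Y × Z) := fun ω j => yz j.castSucc ω
    let yq : Ω → Y := fun ω => (yz (Fin.last n) ω).1
    let zq : Ω → Z := fun ω => (yz (Fin.last n) ω).2
    let post : Kernel (Fin n → Y × Z) A := condDistrib α prev μ
    ∀ᵐ p ∂(μ.map fun ω => (yq ω, prev ω)),
      condDistrib zq (fun ω => (yq ω, prev ω)) μ p
        = (post p.2).bind (fun a => lik (a, p.1)) := by
  intro prev yq zq post
  set ρ := μ.map α
  set κn : Kernel A (Fin n → Y × Z) := κJ.map fun f (j : Fin n) => f j.castSucc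
  have hX : Measurable fun ω j => yz j ω := measurable_pi_lambda _ hyz
  have hprev : Measurable prev := by fun_prop
  have hsplit := Kernel.map_last_init_eq_prod κJ (Kernel.const A νY ⊗ₖ lik) fun a =>
    (hiid a).trans (by rw [Kernel.compProd_apply_eq_compProd_sectR, Kernel.const_apply]; rfl)
  have hαprev : μ.map (fun ω => (α ω, prev ω)) = ρ ⊗ₘ κn := by
    rw [Measure.compProd_map (by fun_prop), ← hjoint,
      Measure.map_map (by fun_prop) (hα.prodMk hX)]
    rfl
  have hpost : (κn ∘ₘ ρ) ⊗ₘ post = (ρ ⊗ₘ κn).map Prod.swap := by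
    rw [← Measure.snd_compProd, ← hαprev, Measure.snd_map_prodMk hα,
      compProd_map_condDistrib hα.aemeasurable, Measure.map_map measurable_swap (hα.prodMk hprev)]
    rfl
  have hlaw : μ.map (fun ω => ((yq ω, prev ω), zq ω))
      = (νY.prod (κn ∘ₘ ρ)) ⊗ₘ Kernel.posteriorPredictive post lik := by
    rw [← map_comp_prod_eq_compProd_posteriorPredictive hpost, ← hsplit,
      ← Measure.map_comp _ _ (by fun_prop), ← Measure.snd_compProd, ← hjoint, Measure.snd,
      Measure.map_map, Measure.map_map, Measure.map_map]
    · rfl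
    all_goals fun_prop
  have hW : μ.map (fun ω => (yq ω, prev ω)) = νY.prod (κn ∘ₘ ρ) := by
    rw [← Measure.fst_compProd (νY.prod (κn ∘ₘ ρ)) (Kernel.posteriorPredictive post lik),
      ← hlaw, Measure.fst_map_prodMk (by fun_prop)]
  filter_upwards [condDistrib_ae_eq_of_measure_eq_compProd _ (by fun_prop) (hW ▸ hlaw)]
    with p hp
  rw [hp, Kernel.posteriorPredictive_apply]

/-- The in-context conditional distribution is the Bayesian posterior predictive:
if, given the parameter `α`, the `n+1` condition–solution pairs `(yʲ, zʲ)` are i.i.d.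
with common law `ν_Y ⊗ lik(α, ·)` (so in particular the new condition `y^J` is
independent of `α` and of the first `n` pairs), then the conditional distribution of
the last solution `z^J` given the last condition `y^J` and the first `n` pairs is the
mixture of the likelihood `lik(·, y^J)` against the posterior distribution of `α`
given the first `n` pairs. -/
theorem stmt_13 {Ω A Y Z : Type*} [MeasurableSpace Ω]
    [MeasurableSpace A] [StandardBorelSpace A] [Nonempty A]
    [MeasurableSpace Y] [StandardBorelSpace Y] [Nonempty Y]
    [MeasurableSpace Z] [StandardBorelSpace Z] [Nonempty Z]
    (μ : Measure Ω) [IsProbabilityMeasure μ]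
    (n : ℕ)
    (α : Ω → A) (hα : Measurable α)
    (yz : Fin (n + 1) → Ω → Y × Z) (hyz : ∀ j, Measurable (yz j))
    (νY : Measure Y) [IsProbabilityMeasure νY]
    (lik : Kernel (A × Y) Z) [IsMarkovKernel lik]
    (κJ : Kernel A (Fin (n + 1) → Y × Z)) [IsMarkovKernel κJ]
    (hiid : ∀ a : A, κJ a = Measure.pi fun _ : Fin (n + 1) =>
        νY.compProd (lik.comap (fun y => (a, y))
          (measurable_const.prodMk measurable_id)))
    (hjoint : Measure.map (fun ω => (α ω, fun j => yz j ω)) μ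
        = (μ.map α).compProd κJ) :
    let prev : Ω → (Fin n → Y × Z) := fun ω j => yz j.castSucc ω
    let yq : Ω → Y := fun ω => (yz (Fin.last n) ω).1
    let zq : Ω → Z := fun ω => (yz (Fin.last n) ω).2
    let post : Kernel (Fin n → Y × Z) A := condDistrib α prev μ
    ∀ᵐ p ∂(μ.map fun ω => (yq ω, prev ω)),
      condDistrib zq (fun ω => (yq ω, prev ω)) μ p
        = (post p.2).bind (fun a => lik (a, p.1)) :=
  stmt_13_general μ n α hα yz hyz νY lik κJ hiid hjoint
end
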